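/- Let C be a coherent additive idempotent complete category and F a finitely presented contravariant functor on C. Then F is 1-torsion free (Ext¹(Tr F, C(X,−)) = 0 for all X) if and only if F embeds into a projective object of mod C; and F is 2-torsion free if and only if the canonical map F → F** is an isomorphism. -/

import Mathlib

open CategoryTheory CategoryTheory.Limits Opposite

namespace Paper


variable {C : Type*} [Category C] [Preadditive C]

/-- Exactness of the sequence of contravariant representable functors at interior position `i`. -/
def YExactAt {m : ℕ} (T : ComposableArrows C m) (i : ℕ) (h : i + 2 ≤ m) : Prop :=
  T.map' i (i+1) (by omega) (by omega) ≫ T.map' (i+1) (i+2) (by omega) h = 0 ∧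
  ∀ (W : C) (u : W ⟶ T.obj' (i+1) (by omega)),
    u ≫ T.map' (i+1) (i+2) (by omega) h = 0 →
      ∃ v : W ⟶ T.obj' i (by omega), v ≫ T.map' i (i+1) (by omega) (by omega) = u

/-- Exactness of the sequence of covariant representable functors at interior position `i`. -/
def CoYExactAt {m : ℕ} (T : ComposableArrows C m) (i : ℕ) (h : i + 2 ≤ m) : Prop :=
  T.map' i (i+1) (by omega) (by omega) ≫ T.map' (i+1) (i+2) (by omega) h = 0 ∧
  ∀ (W : C) (u : T.obj' (i+1) (by omega) ⟶ W),
    T.map' i (i+1) (by omega) (by omega) ≫ u = 0 →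
      ∃ v : T.obj' (i+2) h ⟶ W, T.map' (i+1) (i+2) (by omega) h ≫ v = u

/-- `T = [X_n → ⋯ → X_1 → X → Y]` is such that `X_n → ⋯ → X` is an `n`-kernel of the
last map `X ⟶ Y`, i.e. `0 → C(-,X_n) → ⋯ → C(-,X) → C(-,Y)` is exact. -/
def IsNKernelSeq (n : ℕ) (T : ComposableArrows C (n+1)) : Prop :=
  Mono (T.map' 0 1 (by omega) (by omega)) ∧ ∀ (i : ℕ) (h : i + 2 ≤ n + 1), YExactAt T i h

/-- `T = [X → Y → Y_1 → ⋯ → Y_n]` is such that `Y → ⋯ → Y_n` is an `n`-cokernel of the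
first map `X ⟶ Y`, i.e. `0 → C(Y_n,-) → ⋯ → C(Y,-) → C(X,-)` is exact. -/
def IsNCokernelSeq (n : ℕ) (T : ComposableArrows C (n+1)) : Prop :=
  Epi (T.map' n (n+1) (by omega) (by omega)) ∧ ∀ (i : ℕ) (h : i + 2 ≤ n + 1), CoYExactAt T i h

/-- `T` is an `n`-exact sequence. -/
def IsNExactSeq (n : ℕ) (T : ComposableArrows C (n+1)) : Prop :=
  IsNKernelSeq n T ∧ IsNCokernelSeq n T

/-- The category `C` has `n`-kernels. -/
def HasNKernels (C : Type*) [Category C] [Preadditive C] (n : ℕ) : Prop :=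
  ∀ ⦃X Y : C⦄ (f : X ⟶ Y), ∃ (T : ComposableArrows C (n+1))
    (hX : T.obj' n (by omega) = X) (hY : T.obj' (n+1) (by omega) = Y),
      T.map' n (n+1) (by omega) (by omega) = eqToHom hX ≫ f ≫ eqToHom hY.symm ∧
      IsNKernelSeq n T

/-- The category `C` has `n`-cokernels. -/
def HasNCokernels (C : Type*) [Category C] [Preadditive C] (n : ℕ) : Prop :=
  ∀ ⦃X Y : C⦄ (f : X ⟶ Y), ∃ (T : ComposableArrows C (n+1))
    (hX : T.obj' 0 (by omega) = X) (hY : T.obj' 1 (by omega) = Y),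
      T.map' 0 1 (by omega) (by omega) = eqToHom hX ≫ f ≫ eqToHom hY.symm ∧
      IsNCokernelSeq n T

/-- Axiom (A2): every monomorphism, together with any of its `n`-cokernels, forms an
`n`-exact sequence. -/
def AxiomA2 (C : Type*) [Category C] [Preadditive C] (n : ℕ) : Prop :=
  ∀ (T : ComposableArrows C (n+1)), Mono (T.map' 0 1 (by omega) (by omega)) →
    IsNCokernelSeq n T → IsNExactSeq n T

/-- Axiom (A2ᵒᵖ): every epimorphism, together with any of its `n`-kernels, forms an
`n`-exact sequence. -/
def AxiomA2op (C : Type*) [Category C] [Preadditive C] (n : ℕ) : Prop :=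
  ∀ (T : ComposableArrows C (n+1)), Epi (T.map' n (n+1) (by omega) (by omega)) →
    IsNKernelSeq n T → IsNExactSeq n T

/-- Jasso's axioms for an `n`-abelian category. -/
def IsNAbelian (C : Type*) [Category C] [Preadditive C] (n : ℕ) : Prop :=
  HasNKernels C n ∧ HasNCokernels C n ∧ AxiomA2 C n ∧ AxiomA2op C n

/-- `C` has weak kernels. -/
def HasWeakKernelsP (C : Type*) [Category C] [Preadditive C] : Prop :=
  ∀ ⦃Y Z : C⦄ (g : Y ⟶ Z), ∃ (X : C) (f : X ⟶ Y), f ≫ g = 0 ∧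
    ∀ ⦃W : C⦄ (u : W ⟶ Y), u ≫ g = 0 → ∃ v : W ⟶ X, v ≫ f = u

/-- `C` has weak cokernels. -/
def HasWeakCokernelsP (C : Type*) [Category C] [Preadditive C] : Prop :=
  ∀ ⦃X Y : C⦄ (f : X ⟶ Y), ∃ (Z : C) (g : Y ⟶ Z), f ≫ g = 0 ∧
    ∀ ⦃W : C⦄ (u : Y ⟶ W), f ≫ u = 0 → ∃ v : Z ⟶ W, g ≫ v = u

/-- A category is von Neumann regular if every morphism factors as a split epimorphism
followed by a split monomorphism. -/
def VonNeumannRegular (C : Type*) [Category C] : Prop :=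
  ∀ ⦃X Y : C⦄ (f : X ⟶ Y), ∃ (W : C) (p : X ⟶ W) (j : W ⟶ Y),
    IsSplitEpi p ∧ IsSplitMono j ∧ p ≫ j = f


universe u

variable (C : Type u) [Category.{u} C] [Preadditive C]

/-- The ambient category of contravariant additive-group-valued functors on `C`,
in which `mod C` lives. -/
abbrev AmbC := Cᵒᵖ ⥤ AddCommGrpCat.{u}

/-- The ambient category of covariant additive-group-valued functors on `C`,
in which `mod Cᵒᵖ` lives. -/
abbrev AmbOp := C ⥤ AddCommGrpCat.{u}

variable {C}

/-- `p : B ⟶ Q` is a cokernel of `d : A ⟶ B` (universal property). -/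
def IsCokernelπ {D : Type*} [Category D] [Limits.HasZeroMorphisms D]
    {A B Q : D} (d : A ⟶ B) (p : B ⟶ Q) : Prop :=
  d ≫ p = 0 ∧ ∀ ⦃T : D⦄ (q : B ⟶ T), d ≫ q = 0 → ∃! t : Q ⟶ T, p ≫ t = q

/-- A contravariant functor is finitely presented if it is a cokernel of a morphism
between representable functors. -/
def IsFinitelyPresented (F : AmbC C) : Prop :=
  ∃ (X Y : C) (f : X ⟶ Y) (p : preadditiveYoneda.obj Y ⟶ F),
    IsCokernelπ (preadditiveYoneda.map f) p

/-- A covariant functor is finitely presented if it is a cokernel of a morphism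
between corepresentable functors. -/
def IsFinitelyPresentedOp (G : AmbOp C) : Prop :=
  ∃ (X Y : C) (f : X ⟶ Y) (q : preadditiveCoyoneda.obj (op X) ⟶ G),
    IsCokernelπ (preadditiveCoyoneda.map f.op) q

variable (C)

/-- The category `mod C` of finitely presented contravariant functors. -/
def ModC := ObjectProperty.FullSubcategory (IsFinitelyPresented (C := C))

instance : Category (ModC C) := ObjectProperty.FullSubcategory.category _

/-- The category `mod Cᵒᵖ` of finitely presented covariant functors. -/
def ModOp := ObjectProperty.FullSubcategory (IsFinitelyPresentedOp (C := C))

instance : Category (ModOp C) := ObjectProperty.FullSubcategory.category _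

variable {C}

/-- A finitely generated projective object of `mod C`: a direct summand of a
representable functor. -/
def IsFGProj (P : AmbC C) : Prop :=
  ∃ (X : C) (s : P ⟶ preadditiveYoneda.obj X) (r : preadditiveYoneda.obj X ⟶ P),
    s ≫ r = 𝟙 P

/-- A finitely generated projective object of `mod Cᵒᵖ`: a direct summand of a
corepresentable functor. -/
def IsFGProjOp (P : AmbOp C) : Prop :=
  ∃ (X : C) (s : P ⟶ preadditiveCoyoneda.obj (op X))
    (r : preadditiveCoyoneda.obj (op X) ⟶ P), s ≫ r = 𝟙 P

/-- `pdim F ≤ d` in `mod C`: there is an exact sequence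
`0 → P_d → ⋯ → P_0 → F → 0` with all `P_i` finitely generated projective. -/
def PdimLE (F : AmbC C) (d : ℕ) : Prop :=
  ∃ T : ComposableArrows (AmbC C) (d+1), T.obj' (d+1) (by omega) = F ∧
    (∀ (i : ℕ) (hi : i ≤ d), IsFGProj (T.obj' i (by omega))) ∧
    T.Exact ∧ Mono (T.map' 0 1 (by omega) (by omega)) ∧
    Epi (T.map' d (d+1) (by omega) (by omega))

/-- `pdim G ≤ d` in `mod Cᵒᵖ`. -/
def PdimOpLE (G : AmbOp C) (d : ℕ) : Prop :=
  ∃ T : ComposableArrows (AmbOp C) (d+1), T.obj' (d+1) (by omega) = G ∧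
    (∀ (i : ℕ) (hi : i ≤ d), IsFGProjOp (T.obj' i (by omega))) ∧
    T.Exact ∧ Mono (T.map' 0 1 (by omega) (by omega)) ∧
    Epi (T.map' d (d+1) (by omega) (by omega))

variable (C)

/-- `gldim (mod C) ≤ d`. -/
def GldimLE (d : ℕ) : Prop :=
  ∀ F : AmbC C, IsFinitelyPresented F → PdimLE F d

/-- `gldim (mod Cᵒᵖ) ≤ d`. -/
def GldimOpLE (d : ℕ) : Prop :=
  ∀ G : AmbOp C, IsFinitelyPresentedOp G → PdimOpLE G d

variable {C}

/-- `G ∈ mod Cᵒᵖ` is a transpose of `F ∈ mod C`: for some morphism `f : X ⟶ Y` of `C`,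
`F` is the cokernel of `C(-,f)` and `G` is the cokernel of `C(f,-)`. -/
def IsTransposeOf (G : AmbOp C) (F : AmbC C) : Prop :=
  ∃ (X Y : C) (f : X ⟶ Y) (p : preadditiveYoneda.obj Y ⟶ F)
    (q : preadditiveCoyoneda.obj (op X) ⟶ G),
      IsCokernelπ (preadditiveYoneda.map f) p ∧
      IsCokernelπ (preadditiveCoyoneda.map f.op) q

/-- The homology of `Hom(P'',H) → Hom(P,H) → Hom(P',H)` (obtained by applying `Hom(-,H)`
to `P' ⟶ P ⟶ P''`) vanishes. -/
def ExtVanishesAt {D : Type*} [Category D] [Preadditive D] {P' P P'' : D}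
    (d1 : P' ⟶ P) (d0 : P ⟶ P'') (H : D) : Prop :=
  ∀ φ : P ⟶ H, d1 ≫ φ = 0 → ∃ ψ : P'' ⟶ H, d0 ≫ ψ = φ

/-- A partial projective resolution `P_{m} → ⋯ → P_0 → G` in `mod Cᵒᵖ`. -/
def IsPartialProjResolutionOp {m : ℕ} (R : ComposableArrows (AmbOp C) (m+1))
    (G : AmbOp C) : Prop :=
  R.obj' (m+1) (by omega) = G ∧
  (∀ (j : ℕ) (hj : j ≤ m), IsFGProjOp (R.obj' j (by omega))) ∧
  R.Exact ∧ Epi (R.map' m (m+1) (by omega) (by omega))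

/-- A partial projective resolution `P_{m} → ⋯ → P_0 → F` in `mod C`. -/
def IsPartialProjResolutionC {m : ℕ} (R : ComposableArrows (AmbC C) (m+1))
    (F : AmbC C) : Prop :=
  R.obj' (m+1) (by omega) = F ∧
  (∀ (j : ℕ) (hj : j ≤ m), IsFGProj (R.obj' j (by omega))) ∧
  R.Exact ∧ Epi (R.map' m (m+1) (by omega) (by omega))

/-- `F ∈ mod C` is `k`-torsion free: `Ext^i(Tr F, C(X,-)) = 0` for all `1 ≤ i ≤ k` and
all `X ∈ C`, the `Ext` groups being computed from a projective resolution of a transpose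
`Tr F` in `mod Cᵒᵖ`. -/
def IsTorsionFree (F : AmbC C) (k : ℕ) : Prop :=
  ∃ G : AmbOp C, IsTransposeOf G F ∧
    ∀ i : ℕ, 1 ≤ i → i ≤ k →
      ∃ R : ComposableArrows (AmbOp C) (i+2), IsPartialProjResolutionOp R G ∧
        ∀ X : C, ExtVanishesAt (R.map' 0 1 (by omega) (by omega))
          (R.map' 1 2 (by omega) (by omega)) (preadditiveCoyoneda.obj (op X))

/-- `G ∈ mod Cᵒᵖ` is `k`-torsion free: `Ext^i(Tr G, C(-,X)) = 0` for all `1 ≤ i ≤ k` and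
all `X ∈ C`. -/
def IsTorsionFreeOp (G : AmbOp C) (k : ℕ) : Prop :=
  ∃ F : AmbC C, IsTransposeOf G F ∧
    ∀ i : ℕ, 1 ≤ i → i ≤ k →
      ∃ R : ComposableArrows (AmbC C) (i+2), IsPartialProjResolutionC R F ∧
        ∀ X : C, ExtVanishesAt (R.map' 0 1 (by omega) (by omega))
          (R.map' 1 2 (by omega) (by omega)) (preadditiveYoneda.obj X)

/-- The dual `F*` of a contravariant functor `F`, given by `F*(Y) = Hom(F, C(-,Y))`. -/
def dualR (F : AmbC C) : AmbOp C where
  obj Y := AddCommGrpCat.of (F ⟶ preadditiveYoneda.obj Y)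
  map {Y Y'} g := AddCommGrpCat.ofHom
    { toFun := fun α => α ≫ preadditiveYoneda.map g
      map_zero' := by simp
      map_add' := by intro α β; simp [Preadditive.add_comp] }
  map_id := by
    intro Y
    ext α
    simp
  map_comp := by
    intro Y₁ Y₂ Y₃ g g'
    ext α : 2
    show α ≫ preadditiveYoneda.map (g ≫ g') =
      (α ≫ preadditiveYoneda.map g) ≫ preadditiveYoneda.map g'
    rw [Functor.map_comp, Category.assoc]

/-- The dual `G*` of a covariant functor `G`, given by `G*(X) = Hom(G, C(X,-))`. -/
def dualL (G : AmbOp C) : AmbC C where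
  obj X := AddCommGrpCat.of (G ⟶ preadditiveCoyoneda.obj X)
  map {X X'} h := AddCommGrpCat.ofHom
    { toFun := fun β => β ≫ preadditiveCoyoneda.map h
      map_zero' := by simp
      map_add' := by intro β γ; simp [Preadditive.add_comp] }
  map_id := by
    intro X
    ext β
    simp
  map_comp := by
    intro X₁ X₂ X₃ h h'
    ext β : 2
    show β ≫ preadditiveCoyoneda.map (h ≫ h') =
      (β ≫ preadditiveCoyoneda.map h) ≫ preadditiveCoyoneda.map h'
    rw [Functor.map_comp, Category.assoc]

/-- The double dual `F**`. -/
def ddual (F : AmbC C) : AmbC C := dualL (dualR F)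


/-- Evaluation at `a ∈ F(X)`: the natural transformation `F* ⟶ C(X,-)`. -/
def evalNat (F : AmbC C) (X : Cᵒᵖ) (a : F.obj X) :
    dualR F ⟶ preadditiveCoyoneda.obj X where
  app Y := AddCommGrpCat.ofHom
    { toFun := fun α => α.app X a
      map_zero' := rfl
      map_add' := by intro α β; rfl }
  naturality := by
    intro Y Y' g
    ext α
    rfl


/-- The canonical morphism `F ⟶ F**` to the double dual. -/
def ddualUnit (F : AmbC C) : F ⟶ ddual F where
  app X := AddCommGrpCat.ofHom
    { toFun := fun a => evalNat F X a
      map_zero' := by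
        ext Y α
        show α.app X 0 = 0
        simp
      map_add' := by
        intro a b
        ext Y α
        show α.app X (a + b) = α.app X a + α.app X b
        simp }
  naturality := by
    intro X X' h
    ext a
    show evalNat F X' (F.map h a) = evalNat F X a ≫ preadditiveCoyoneda.map h
    ext Y α
    show α.app X' (F.map h a) = (preadditiveCoyoneda.map h).app Y (α.app X a)
    have h1 := congrArg (fun (m : F.obj X ⟶ (preadditiveYoneda.obj Y).obj X') => m a)
      (α.naturality h)
    dsimp only at h1
    have h2 : α.app X' (F.map h a) = ((preadditiveYoneda.obj Y).map h) (α.app X a) := h1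
    rw [h2]
    rfl


/-- Precomposition with `d`, as an additive map between hom-groups. -/
def precompHom {D : Type*} [Category D] [Preadditive D] {A B : D} (d : A ⟶ B) (H : D) :
    (B ⟶ H) →+ (A ⟶ H) :=
  AddMonoidHom.mk' (fun φ => d ≫ φ) (fun φ ψ => Preadditive.comp_add _ _ _ _ _ _)

/-- The cohomology at the middle spot of `Hom(P'',H) → Hom(P,H) → Hom(P',H)`, i.e. the
`Ext` group computed from the (partial resolution) data `P' --d1--> P --d0--> P''`. -/
def extGrp {D : Type*} [Category D] [Preadditive D] {P' P P'' : D}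
    (d1 : P' ⟶ P) (d0 : P ⟶ P'') (H : D) : Type _ :=
  AddMonoidHom.ker (precompHom d1 H) ⧸
    ((precompHom d0 H).range.addSubgroupOf (AddMonoidHom.ker (precompHom d1 H)))

noncomputable instance {D : Type*} [Category D] [Preadditive D] {P' P P'' : D}
    (d1 : P' ⟶ P) (d0 : P ⟶ P'') (H : D) : AddCommGroup (extGrp d1 d0 H) := by
  unfold extGrp; infer_instance

end Paper

open Paper Opposite

/-!
Present `F` as the cokernel of `C(-,f)` for some `f : X ⟶ Y`, and choose a weak cokernel `g` of
`f` and a weak cokernel `h` of `g`; they exist because `mod Cᵒᵖ` is abelian. Then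
`C(h,-) → C(g,-) → C(f,-)` begins a projective resolution of the transpose `coker C(f,-)`, and
by the Yoneda lemma `Ext¹(Tr F, C(Z,-)) = 0` for all `Z` says that `f` is a weak kernel of `g`,
while `Ext²(Tr F, C(Z,-)) = 0` says that `g` is a weak kernel of `h`. Comparing projective
resolutions shows that these conditions do not depend on the chosen transpose and resolution.

Dually, `F* ⊆ C(Y,-)` is the image of `C(g,-)`, i.e. the cokernel of `C(h,-)`, so `F**(Z)` is
the kernel of `C(Z,W) → C(Z,V)`, and `F(Z) → F**(Z)` is the map
`coker (C(Z,X) → C(Z,Y)) → ker (C(Z,W) → C(Z,V))` induced by `g`. It is injective iff `f` is a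
weak kernel of `g`, and surjective iff `g` is a weak kernel of `h`. Finally, `F` embeds into a
projective iff `F → F**` is mono: an embedding `α : F ↪ C(-,V)` factors through `F → F**` by
evaluation at `α`, and conversely `F → F**` and the map `F → C(-,W)` induced by `g` have the
same kernel.
-/

namespace Paper

section FunctorCategory

universe w

variable {K : Type*} [Category K] {A B : K ⥤ AddCommGrpCat.{w}}

lemma mono_iff_injective_app (η : A ⟶ B) : Mono η ↔ ∀ k, Function.Injective (η.app k) := by
  simp only [NatTrans.mono_iff_mono_app, AddCommGrpCat.mono_iff_injective]

lemma epi_iff_surjective_app (η : A ⟶ B) : Epi η ↔ ∀ k, Function.Surjective (η.app k) := by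
  simp only [NatTrans.epi_iff_epi_app, AddCommGrpCat.epi_iff_surjective]

lemma shortComplex_exact_iff_app {S : ShortComplex (K ⥤ AddCommGrpCat.{w})} :
    S.Exact ↔ ∀ (k : K) (x : S.X₂.obj k), S.g.app k x = 0 → ∃ a, S.f.app k a = x := by
  refine ⟨fun hS k => (ShortComplex.ab_exact_iff _).1 (hS.map ((evaluation K _).obj k)),
    fun h => ?_⟩
  rw [S.exact_iff_kernel_ι_comp_cokernel_π_zero]
  ext k x
  obtain ⟨a, ha⟩ := h k ((kernel.ι S.g).app k x) (by
    rw [← ConcreteCategory.comp_apply, ← NatTrans.comp_app, kernel.condition]; rfl)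
  rw [NatTrans.comp_app, ConcreteCategory.comp_apply, ← ha, ← ConcreteCategory.comp_apply,
    ← NatTrans.comp_app, cokernel.condition]
  rfl

end FunctorCategory

section Cokernel

variable {D : Type*} [Category D]

lemma IsCokernelπ.epi [HasZeroMorphisms D] {A B Q : D} {d : A ⟶ B} {p : B ⟶ Q}
    (h : IsCokernelπ d p) : Epi p := by
  refine ⟨fun {T} q₁ q₂ hq => ?_⟩
  obtain ⟨t, -, huniq⟩ := h.2 (p ≫ q₂) (by rw [← Category.assoc, h.1, zero_comp])
  rw [huniq q₂ rfl, huniq q₁ hq]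

lemma IsCokernelπ.exact [Abelian D] {A B Q : D} {d : A ⟶ B} {p : B ⟶ Q}
    (h : IsCokernelπ d p) : (ShortComplex.mk d p h.1).Exact :=
  ShortComplex.exact_of_g_is_cokernel _ <| CokernelCofork.IsColimit.ofπ _ _
    (fun q hq => (h.2 q hq).choose) (fun q hq => (h.2 q hq).choose_spec.1)
    (fun q hq m hm => (h.2 q hq).choose_spec.2 m hm)

lemma isCokernelπ_cokernelπ [HasZeroMorphisms D] {A B : D} (d : A ⟶ B) [HasCokernel d] :
    IsCokernelπ d (cokernel.π d) :=
  ⟨cokernel.condition d, fun _ q hq => ⟨cokernel.desc d q hq, cokernel.π_desc d q hq,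
    fun _ ht => coequalizer.hom_ext (by simpa using ht)⟩⟩

end Cokernel

section Corepresentable

variable {C : Type u} [Category.{u} C] [Preadditive C]

abbrev corep (V : C) : AmbOp C := preadditiveCoyoneda.obj (op V)

abbrev corepMap {X Y : C} (f : X ⟶ Y) : corep Y ⟶ corep X := preadditiveCoyoneda.map f.op

lemma corepMap_comp {X Y W : C} (f : X ⟶ Y) (g : Y ⟶ W) :
    corepMap (f ≫ g) = corepMap g ≫ corepMap f := by
  simp [corepMap]

lemma corepMap_injective {X Y : C} : Function.Injective (corepMap : (X ⟶ Y) → _) :=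
  fun _ _ h => Quiver.Hom.op_inj (preadditiveCoyoneda.map_injective h)

lemma exists_corepMap_eq {X Y : C} (η : corep Y ⟶ corep X) : ∃ f : X ⟶ Y, corepMap f = η :=
  ⟨(preadditiveCoyoneda.preimage η).unop, by simp [corepMap]⟩

lemma corepMap_zero (X Y : C) : corepMap (0 : X ⟶ Y) = 0 := by
  ext Z (x : Y ⟶ Z)
  exact zero_comp

lemma corepMap_eq_zero_iff {X Y : C} (f : X ⟶ Y) : corepMap f = 0 ↔ f = 0 := by
  rw [← corepMap_zero]
  exact corepMap_injective.eq_iff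

lemma corep_hom_ext {V : C} {B : AmbOp C} {η η' : corep V ⟶ B}
    (h : η.app V (𝟙 V) = η'.app V (𝟙 V)) : η = η' := by
  have key (θ : corep V ⟶ B) (Z : C) (x : V ⟶ Z) : θ.app Z x = B.map x (θ.app V (𝟙 V)) :=
    (congrArg (θ.app Z) (Category.id_comp x).symm).trans
      (NatTrans.naturality_apply θ x (show (corep V).obj V from 𝟙 V))
  ext Z (x : V ⟶ Z)
  rw [key η, key η', h]

def elemHom (A : AmbOp C) [A.Additive] {V : C} (a : A.obj V) : corep V ⟶ A where
  app Z := AddCommGrpCat.ofHom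
    { toFun := fun (x : V ⟶ Z) => A.map x a
      map_zero' := by
        show A.map (0 : V ⟶ Z) a = 0
        rw [Functor.map_zero]; rfl
      map_add' := fun (x y : V ⟶ Z) => by
        show A.map (x + y) a = A.map x a + A.map y a
        rw [Functor.map_add]; rfl }
  naturality Z Z' k := by
    ext (x : V ⟶ Z)
    show A.map (x ≫ k) a = A.map k (A.map x a)
    rw [Functor.map_comp]; rfl

lemma IsFGProjOp.additive {P : AmbOp C} (hP : IsFGProjOp P) : P.Additive := by
  obtain ⟨V, s, r, hsr⟩ := hP
  have hmap {Z Z' : C} (k : Z ⟶ Z') : P.map k = s.app Z ≫ (corep V).map k ≫ r.app Z' := by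
    rw [← NatTrans.naturality_assoc, ← NatTrans.comp_app, hsr, NatTrans.id_app, Category.comp_id]
  exact ⟨fun {_ _ _ _} => by
    rw [hmap, hmap, hmap, Functor.map_add, Preadditive.add_comp, Preadditive.comp_add]⟩

lemma isFGProjOp_corep (V : C) : IsFGProjOp (corep V) := ⟨V, 𝟙 _, 𝟙 _, Category.id_comp _⟩

/- Objects of `AmbOp C` need not be additive functors; `corep V`, and hence every `IsFGProjOp`,
is projective only relative to additive targets. -/
lemma IsFGProjOp.exists_lift {P A B : AmbOp C} (hP : IsFGProjOp P) [A.Additive] (e : A ⟶ B)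
    (β : P ⟶ B) (h : ∀ Z (x : P.obj Z), ∃ a, e.app Z a = β.app Z x) :
    ∃ α : P ⟶ A, α ≫ e = β := by
  obtain ⟨V, s, r, hsr⟩ := hP
  obtain ⟨a, ha⟩ := h V (r.app V (𝟙 V))
  have hlift : elemHom A a ≫ e = r ≫ β := corep_hom_ext <| by
    show e.app V (A.map (𝟙 V) a) = β.app V (r.app V (𝟙 V))
    rw [A.map_id]
    exact ha
  exact ⟨s ≫ elemHom A a, by rw [Category.assoc, hlift, reassoc_of% hsr]⟩

lemma IsFGProjOp.exists_lift_of_epi {P A B : AmbOp C} (hP : IsFGProjOp P) [A.Additive]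
    (e : A ⟶ B) [Epi e] (β : P ⟶ B) : ∃ α : P ⟶ A, α ≫ e = β :=
  hP.exists_lift e β fun Z x => (epi_iff_surjective_app e).1 inferInstance Z (β.app Z x)

lemma IsFGProjOp.exists_lift_of_exact {P A B Q : AmbOp C} (hP : IsFGProjOp P) [A.Additive]
    {f : A ⟶ B} {g : B ⟶ Q} {w : f ≫ g = 0} (hS : (ShortComplex.mk f g w).Exact)
    (β : P ⟶ B) (hβ : β ≫ g = 0) : ∃ α : P ⟶ A, α ≫ f = β :=
  hP.exists_lift f β fun Z x => shortComplex_exact_iff_app.1 hS Z (β.app Z x) <| by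
    rw [← ConcreteCategory.comp_apply, ← NatTrans.comp_app, hβ]
    rfl

end Corepresentable

lemma ExtVanishesAt.of_homotopy {D : Type*} [Category D] [Preadditive D]
    {P' P P'' Q' Q Q'' H : D} {c : P' ⟶ P} {a : P ⟶ P''} {c' : Q' ⟶ Q} {a' : Q ⟶ Q''}
    (h : ExtVanishesAt c a H) (u : Q ⟶ P) (u'' : Q'' ⟶ P'') (v : P ⟶ Q) (v' : P' ⟶ Q')
    (σ : Q'' ⟶ Q) (τ : Q ⟶ Q') (hu : u ≫ a = a' ≫ u'') (hv : v' ≫ c' = c ≫ v)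
    (hσ : u ≫ v - 𝟙 Q = a' ≫ σ + τ ≫ c') : ExtVanishesAt c' a' H := by
  intro φ hφ
  obtain ⟨ψ, hψ⟩ := h (v ≫ φ) (by rw [← reassoc_of% hv, hφ, comp_zero])
  have key : u ≫ v - a' ≫ σ = 𝟙 Q + τ ≫ c' := by
    rw [sub_eq_iff_eq_add.1 hσ]
    abel
  refine ⟨u'' ≫ ψ - σ ≫ φ, ?_⟩
  calc a' ≫ (u'' ≫ ψ - σ ≫ φ) = (u ≫ v - a' ≫ σ) ≫ φ := by
        simp only [Preadditive.comp_sub, Preadditive.sub_comp, ← reassoc_of% hu, hψ,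
          Category.assoc]
    _ = φ := by
        rw [key, Preadditive.add_comp, Category.id_comp, Category.assoc, hφ, comp_zero, add_zero]

lemma exact_comp_eqToHom {D : Type*} [Category D] [HasZeroMorphisms D] {A B Q Z : D}
    {f : A ⟶ B} {g : B ⟶ Q} {w : f ≫ g = 0} (hS : (ShortComplex.mk f g w).Exact) (h : Q = Z) :
    (ShortComplex.mk f (g ≫ eqToHom h) (by rw [reassoc_of% w, zero_comp])).Exact := by
  subst h
  simpa using hS

section Comparison

variable {C : Type u} [Category.{u} C] [Preadditive C]

/- Chain maps `u : Q ⟶ P` and `v : P ⟶ Q` over `𝟙 G` in degrees `≤ 1`, together with a homotopy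
`u ≫ v ≃ 𝟙` in degree `1`. -/
lemma exists_comparison {P₁ P₀ Q₂ Q₁ Q₀ G : AmbOp C} {b : P₁ ⟶ P₀} {e : P₀ ⟶ G}
    {a' : Q₂ ⟶ Q₁} {b' : Q₁ ⟶ Q₀} {e' : Q₀ ⟶ G}
    (hP₁ : IsFGProjOp P₁) (hP₀ : IsFGProjOp P₀)
    (hQ₂ : IsFGProjOp Q₂) (hQ₁ : IsFGProjOp Q₁) (hQ₀ : IsFGProjOp Q₀)
    (hbe : b ≫ e = 0) (ha'b' : a' ≫ b' = 0) (hb'e' : b' ≫ e' = 0)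
    (hexP₀ : (ShortComplex.mk b e hbe).Exact)
    (hexQ₁ : (ShortComplex.mk a' b' ha'b').Exact) (hexQ₀ : (ShortComplex.mk b' e' hb'e').Exact)
    [Epi e] [Epi e'] :
    ∃ (u₁ : Q₁ ⟶ P₁) (u₀ : Q₀ ⟶ P₀) (v₁ : P₁ ⟶ Q₁) (v₀ : P₀ ⟶ Q₀) (σ₀ : Q₀ ⟶ Q₁)
      (σ₁ : Q₁ ⟶ Q₂), u₁ ≫ b = b' ≫ u₀ ∧ v₁ ≫ b' = b ≫ v₀ ∧
        u₁ ≫ v₁ - 𝟙 Q₁ = b' ≫ σ₀ + σ₁ ≫ a' := by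
  have := hP₁.additive; have := hP₀.additive
  have := hQ₂.additive; have := hQ₁.additive; have := hQ₀.additive
  obtain ⟨u₀, hu₀⟩ := hQ₀.exists_lift_of_epi e e'
  obtain ⟨u₁, hu₁⟩ := hQ₁.exists_lift_of_exact hexP₀ (b' ≫ u₀)
    (by rw [Category.assoc]; exact (congrArg _ hu₀).trans hb'e')
  obtain ⟨v₀, hv₀⟩ := hP₀.exists_lift_of_epi e' e
  obtain ⟨v₁, hv₁⟩ := hP₁.exists_lift_of_exact hexQ₀ (b ≫ v₀)
    (by rw [Category.assoc]; exact (congrArg _ hv₀).trans hbe)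
  obtain ⟨σ₀, hσ₀⟩ := hQ₀.exists_lift_of_exact hexQ₀ (u₀ ≫ v₀ - 𝟙 Q₀)
    (by rw [Preadditive.sub_comp, Category.assoc, hv₀, hu₀, Category.id_comp, sub_self])
  obtain ⟨σ₁, hσ₁⟩ := hQ₁.exists_lift_of_exact hexQ₁ (u₁ ≫ v₁ - 𝟙 Q₁ - b' ≫ σ₀) (by
      simp only [Preadditive.sub_comp, Category.assoc, hv₁, reassoc_of% hu₁, hσ₀,
        Preadditive.comp_sub, Category.id_comp, Category.comp_id]
      abel)
  exact ⟨u₁, u₀, v₁, v₀, σ₀, σ₁, hu₁, hv₁, by rw [hσ₁]; abel⟩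

lemma IsPartialProjResolutionOp.extVanishesAt_one {G H : AmbOp C}
    {R S : ComposableArrows (AmbOp C) 3} (hR : IsPartialProjResolutionOp R G)
    (hS : IsPartialProjResolutionOp S G) (h : ExtVanishesAt (R.map' 0 1) (R.map' 1 2) H) :
    ExtVanishesAt (S.map' 0 1) (S.map' 1 2) H := by
  obtain ⟨hRG, hRproj, hRex, hRepi⟩ := hR
  obtain ⟨hSG, hSproj, hSex, hSepi⟩ := hS
  have := (hSproj 0 (by omega)).additive
  obtain ⟨u₁, u₀, v₁, v₀, σ₀, σ₁, hu₁, hv₁, hσ₁⟩ := exists_comparison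
    (hRproj 1 (by omega)) (hRproj 2 (by omega))
    (hSproj 0 (by omega)) (hSproj 1 (by omega)) (hSproj 2 (by omega)) _ _ _
    (exact_comp_eqToHom (hRex.exact' 1 2 3) hRG) (hSex.exact' 0 1 2)
    (exact_comp_eqToHom (hSex.exact' 1 2 3) hSG)
  obtain ⟨v₂, hv₂⟩ := (hRproj 0 (by omega)).exists_lift_of_exact (hSex.exact' 0 1 2)
    (R.map' 0 1 ≫ v₁) (by rw [Category.assoc, hv₁, hRex.toIsComplex.zero'_assoc 0 1 2, zero_comp])
  exact h.of_homotopy u₁ u₀ v₁ v₂ σ₀ σ₁ hu₁ hv₂ hσ₁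

lemma IsPartialProjResolutionOp.extVanishesAt_two {G H : AmbOp C}
    {R S : ComposableArrows (AmbOp C) 4} (hR : IsPartialProjResolutionOp R G)
    (hS : IsPartialProjResolutionOp S G) (h : ExtVanishesAt (R.map' 0 1) (R.map' 1 2) H) :
    ExtVanishesAt (S.map' 0 1) (S.map' 1 2) H := by
  obtain ⟨hRG, hRproj, hRex, hRepi⟩ := hR
  obtain ⟨hSG, hSproj, hSex, hSepi⟩ := hS
  have := (hRproj 1 (by omega)).additive
  have := (hRproj 2 (by omega)).additive
  have := (hSproj 0 (by omega)).additive
  have := (hSproj 1 (by omega)).additive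
  obtain ⟨u₁, u₀, v₁, v₀, σ₀, σ₁, hu₁, hv₁, hσ₁⟩ := exists_comparison
    (hRproj 2 (by omega)) (hRproj 3 (by omega))
    (hSproj 1 (by omega)) (hSproj 2 (by omega)) (hSproj 3 (by omega)) _ _ _
    (exact_comp_eqToHom (hRex.exact' 2 3 4) hRG) (hSex.exact' 1 2 3)
    (exact_comp_eqToHom (hSex.exact' 2 3 4) hSG)
  obtain ⟨u₂, hu₂⟩ := (hSproj 1 (by omega)).exists_lift_of_exact (hRex.exact' 1 2 3)
    (S.map' 1 2 ≫ u₁) (by rw [Category.assoc, hu₁, hSex.toIsComplex.zero'_assoc 1 2 3, zero_comp])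
  obtain ⟨v₂, hv₂⟩ := (hRproj 1 (by omega)).exists_lift_of_exact (hSex.exact' 1 2 3)
    (R.map' 1 2 ≫ v₁) (by rw [Category.assoc, hv₁, hRex.toIsComplex.zero'_assoc 1 2 3, zero_comp])
  obtain ⟨v₃, hv₃⟩ := (hRproj 0 (by omega)).exists_lift_of_exact (hSex.exact' 0 1 2)
    (R.map' 0 1 ≫ v₂) (by rw [Category.assoc, hv₂, hRex.toIsComplex.zero'_assoc 0 1 2, zero_comp])
  obtain ⟨σ₂, hσ₂⟩ := (hSproj 1 (by omega)).exists_lift_of_exact (hSex.exact' 0 1 2)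
    (u₂ ≫ v₂ - 𝟙 _ - S.map' 1 2 ≫ σ₁) (by
      have hσ₁' : σ₁ ≫ S.map' 1 2 = u₁ ≫ v₁ - 𝟙 _ - S.map' 2 3 ≫ σ₀ := by rw [hσ₁]; abel
      simp only [Preadditive.sub_comp, Category.assoc, hv₂, reassoc_of% hu₂, hσ₁',
        Preadditive.comp_sub, Category.id_comp, Category.comp_id,
        hSex.toIsComplex.zero'_assoc 1 2 3, zero_comp]
      abel)
  exact h.of_homotopy u₂ u₁ v₂ v₃ σ₁ σ₂ hu₂ hv₃ (by rw [hσ₂]; abel)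

end Comparison

section WeakKernels

variable {C : Type*} [Category C] [HasZeroMorphisms C]

def IsWeakKernel {X Y W : C} (f : X ⟶ Y) (g : Y ⟶ W) : Prop :=
  f ≫ g = 0 ∧ ∀ ⦃Z : C⦄ (t : Z ⟶ Y), t ≫ g = 0 → ∃ s : Z ⟶ X, s ≫ f = t

def IsWeakCokernel {X Y W : C} (f : X ⟶ Y) (g : Y ⟶ W) : Prop :=
  f ≫ g = 0 ∧ ∀ ⦃Z : C⦄ (t : Y ⟶ Z), f ≫ t = 0 → ∃ v : W ⟶ Z, g ≫ v = t

end WeakKernels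

section StandardResolution

variable {C : Type u} [Category.{u} C] [Preadditive C]

lemma IsWeakCokernel.exact_corepMap {X Y W : C} {f : X ⟶ Y} {g : Y ⟶ W}
    (hg : IsWeakCokernel f g) :
    (ShortComplex.mk (corepMap g) (corepMap f)
      (by rw [← corepMap_comp, hg.1, corepMap_zero])).Exact :=
  shortComplex_exact_iff_app.2 fun _ (x : Y ⟶ _) hx => hg.2 x hx

lemma extVanishesAt_corepMap_iff {X Y W : C} {f : X ⟶ Y} {g : Y ⟶ W} (hfg : f ≫ g = 0) :
    (∀ Z : C, ExtVanishesAt (corepMap g) (corepMap f) (corep Z)) ↔ IsWeakKernel f g := by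
  refine ⟨fun h => ⟨hfg, fun Z t ht => ?_⟩, fun h Z φ hφ => ?_⟩
  · obtain ⟨ψ, hψ⟩ := h Z (corepMap t) (by rw [← corepMap_comp, ht, corepMap_zero])
    obtain ⟨s, rfl⟩ := exists_corepMap_eq ψ
    exact ⟨s, corepMap_injective (by rw [corepMap_comp, hψ])⟩
  · obtain ⟨t, rfl⟩ := exists_corepMap_eq φ
    obtain ⟨s, rfl⟩ := h.2 t ((corepMap_eq_zero_iff _).1 (by rw [corepMap_comp, hφ]))
    exact ⟨corepMap s, (corepMap_comp s f).symm⟩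

lemma isPartialProjResolutionOp_mk₃ {X Y W : C} {f : X ⟶ Y} {g : Y ⟶ W} {G : AmbOp C}
    {q : corep X ⟶ G} (hg : IsWeakCokernel f g) (hq : IsCokernelπ (corepMap f) q) :
    IsPartialProjResolutionOp (ComposableArrows.mk₃ (corepMap g) (corepMap f) q) G := by
  refine ⟨rfl, fun j hj => ?_, ?_, hq.epi⟩
  · interval_cases j <;> exact isFGProjOp_corep _
  · exact ComposableArrows.exact_of_δ₀ (ComposableArrows.exact₂_mk _ _ hg.exact_corepMap)
      (ComposableArrows.exact₂_mk _ _ hq.exact)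

lemma isPartialProjResolutionOp_mk₄ {X Y W V : C} {f : X ⟶ Y} {g : Y ⟶ W} {h : W ⟶ V}
    {G : AmbOp C} {q : corep X ⟶ G} (hg : IsWeakCokernel f g) (hh : IsWeakCokernel g h)
    (hq : IsCokernelπ (corepMap f) q) :
    IsPartialProjResolutionOp
      (ComposableArrows.mk₄ (corepMap h) (corepMap g) (corepMap f) q) G := by
  refine ⟨rfl, fun j hj => ?_, ?_, hq.epi⟩
  · interval_cases j <;> exact isFGProjOp_corep _
  · exact ComposableArrows.exact_of_δ₀ (ComposableArrows.exact₂_mk _ _ hh.exact_corepMap)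
      (ComposableArrows.exact_of_δ₀ (ComposableArrows.exact₂_mk _ _ hg.exact_corepMap)
        (ComposableArrows.exact₂_mk _ _ hq.exact))

lemma isFinitelyPresentedOp_corep (V : C) : IsFinitelyPresentedOp (corep V) :=
  ⟨V, V, 0, 𝟙 _, (Category.comp_id _).trans (corepMap_zero V V),
    fun _ q _ => ⟨q, Category.id_comp q, fun t ht => (Category.id_comp t).symm.trans ht⟩⟩

/- The given abelian structure on `mod Cᵒᵖ` has the ambient zero morphisms, since zero morphisms
are unique. -/
lemma zero_hom_modOp [I : HasZeroMorphisms (ModOp C)] (A B : ModOp C) :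
    (0 : A ⟶ B).hom = 0 := by
  obtain rfl := HasZeroMorphisms.ext I
    (inferInstanceAs (HasZeroMorphisms (ObjectProperty.FullSubcategory IsFinitelyPresentedOp)))
  rfl

/- The kernel of `C(f,-)` in `mod Cᵒᵖ` is a quotient of some `C(W,-)`, and the composite
`C(W,-) ⟶ C(Y,-)` is `C(g,-)` for a weak cokernel `g : Y ⟶ W` of `f`. -/
lemma exists_isWeakCokernel [Abelian (ModOp C)] {X Y : C} (f : X ⟶ Y) :
    ∃ (W : C) (g : Y ⟶ W), IsWeakCokernel f g := by
  let A : ModOp C := ⟨corep Y, isFinitelyPresentedOp_corep Y⟩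
  let B : ModOp C := ⟨corep X, isFinitelyPresentedOp_corep X⟩
  let φ : A ⟶ B := ObjectProperty.homMk (corepMap f)
  have hι : (kernel.ι φ).hom ≫ corepMap f = 0 :=
    (congrArg (fun m : kernel φ ⟶ B => m.hom) (kernel.condition φ)).trans (zero_hom_modOp _ _)
  obtain ⟨W, _, _, q, hq⟩ := (kernel φ).property
  have := hq.epi
  obtain ⟨g, hg⟩ := exists_corepMap_eq (q ≫ (kernel.ι φ).hom)
  refine ⟨W, g, corepMap_injective ?_, fun Z t ht => ?_⟩
  · rw [corepMap_comp, hg, Category.assoc, hι, comp_zero, corepMap_zero]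
  · let T : ModOp C := ⟨corep Z, isFinitelyPresentedOp_corep Z⟩
    obtain ⟨k, hk⟩ : ∃ k : T ⟶ kernel φ, k ≫ kernel.ι φ = ObjectProperty.homMk (corepMap t) :=
      ⟨kernel.lift φ _ (ObjectProperty.hom_ext _ (by
        rw [zero_hom_modOp]
        show corepMap t ≫ corepMap f = 0
        rw [← corepMap_comp, ht, corepMap_zero])), kernel.lift_ι _ _ _⟩
    replace hk : k.hom ≫ (kernel.ι φ).hom = corepMap t := congrArg (fun m : T ⟶ A => m.hom) hk
    obtain ⟨l, hl⟩ := (isFGProjOp_corep Z).exists_lift_of_epi q k.hom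
    obtain ⟨v, rfl⟩ := exists_corepMap_eq l
    exact ⟨v, corepMap_injective (by rw [corepMap_comp, hg, ← Category.assoc, hl, hk])⟩

end StandardResolution

section Duality

variable {C : Type u} [Category.{u} C] [Preadditive C]

abbrev rep (V : C) : AmbC C := preadditiveYoneda.obj V

abbrev repMap {X Y : C} (f : X ⟶ Y) : rep X ⟶ rep Y := preadditiveYoneda.map f

lemma repMap_comp {X Y W : C} (f : X ⟶ Y) (g : Y ⟶ W) :
    repMap (f ≫ g) = repMap f ≫ repMap g :=
  preadditiveYoneda.map_comp f g

lemma repMap_injective {X Y : C} : Function.Injective (repMap : (X ⟶ Y) → _) :=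
  fun _ _ h => preadditiveYoneda.map_injective h

lemma exists_repMap_eq {X Y : C} (η : rep X ⟶ rep Y) : ∃ f : X ⟶ Y, repMap f = η :=
  ⟨preadditiveYoneda.preimage η, by simp [repMap]⟩

lemma repMap_zero (X Y : C) : repMap (0 : X ⟶ Y) = 0 := by
  ext Z (x : Z.unop ⟶ X)
  exact comp_zero

lemma repMap_eq_zero_iff {X Y : C} (f : X ⟶ Y) : repMap f = 0 ↔ f = 0 := by
  rw [← repMap_zero]
  exact repMap_injective.eq_iff

lemma repMap_add {X Y : C} (f f' : X ⟶ Y) : repMap (f + f') = repMap f + repMap f' := by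
  ext Z (x : Z.unop ⟶ X)
  exact Preadditive.comp_add _ _ _ _ _ _

instance (F : AmbC C) : (dualR F).Additive where
  map_add {_ _ k k'} := by
    ext (α : F ⟶ rep _)
    show α ≫ repMap (k + k') = α ≫ repMap k + α ≫ repMap k'
    rw [repMap_add, Preadditive.comp_add]

def dualCover {F : AmbC C} {W : C} (α₀ : F ⟶ rep W) : corep W ⟶ dualR F :=
  elemHom (dualR F) (show (dualR F).obj W from α₀)

lemma dualCover_comp_evalNat {F : AmbC C} {W Z : C} (α₀ : F ⟶ rep W) (a : F.obj (op Z)) :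
    dualCover α₀ ≫ evalNat F (op Z) a = corepMap (α₀.app (op Z) a) := rfl

variable {F : AmbC C} {X Y W : C} {f : X ⟶ Y} {p : rep Y ⟶ F} {g : Y ⟶ W} {α₀ : F ⟶ rep W}

lemma IsCokernelπ.app_eq_zero_iff (hp : IsCokernelπ (repMap f) p) {Z : C} (s : Z ⟶ Y) :
    p.app (op Z) s = 0 ↔ ∃ r : Z ⟶ X, r ≫ f = s := by
  refine ⟨shortComplex_exact_iff_app.1 hp.exact (op Z) s, ?_⟩
  rintro ⟨r, rfl⟩
  show (repMap f ≫ p).app (op Z) r = 0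
  rw [hp.1]
  rfl

lemma app_app_eq_of_comp_eq (hα₀ : p ≫ α₀ = repMap g) {Z : C} (s : Z ⟶ Y) :
    α₀.app (op Z) (p.app (op Z) s) = s ≫ g := by
  show (p ≫ α₀).app (op Z) s = s ≫ g
  rw [hα₀]
  rfl

lemma comp_repMap_eq_zero_iff (hp : IsCokernelπ (repMap f) p) (hα₀ : p ≫ α₀ = repMap g)
    {V : C} (v : W ⟶ V) : α₀ ≫ repMap v = 0 ↔ g ≫ v = 0 := by
  have := hp.epi
  rw [← cancel_epi p, comp_zero, reassoc_of% hα₀, ← repMap_comp, repMap_eq_zero_iff]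

lemma exists_eq_comp_repMap (hp : IsCokernelπ (repMap f) p) (hg : IsWeakCokernel f g)
    (hα₀ : p ≫ α₀ = repMap g) {V : C} (α : F ⟶ rep V) : ∃ v : W ⟶ V, α = α₀ ≫ repMap v := by
  have := hp.epi
  obtain ⟨t, ht⟩ := exists_repMap_eq (p ≫ α)
  obtain ⟨v, rfl⟩ := hg.2 t <| (repMap_eq_zero_iff _).1 <| by
    rw [repMap_comp, ht, ← Category.assoc, hp.1, zero_comp]
  exact ⟨v, (cancel_epi p).1 (by rw [← ht, repMap_comp, reassoc_of% hα₀])⟩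

lemma epi_dualCover (hp : IsCokernelπ (repMap f) p) (hg : IsWeakCokernel f g)
    (hα₀ : p ≫ α₀ = repMap g) : Epi (dualCover α₀) :=
  (epi_iff_surjective_app _).2 fun _ α =>
    let ⟨v, hv⟩ := exists_eq_comp_repMap hp hg hα₀ α
    ⟨v, hv.symm⟩

lemma corepMap_comp_dualCover (hp : IsCokernelπ (repMap f) p) (hα₀ : p ≫ α₀ = repMap g)
    {V : C} {h : W ⟶ V} (hgh : g ≫ h = 0) : corepMap h ≫ dualCover α₀ = 0 := by
  ext Z (x : V ⟶ Z)
  exact (comp_repMap_eq_zero_iff hp hα₀ (h ≫ x)).2 (by rw [reassoc_of% hgh, zero_comp])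

lemma exact_dualCover (hp : IsCokernelπ (repMap f) p) (hα₀ : p ≫ α₀ = repMap g) {V : C}
    {h : W ⟶ V} (hh : IsWeakCokernel g h) :
    (ShortComplex.mk _ _ (corepMap_comp_dualCover hp hα₀ hh.1)).Exact :=
  shortComplex_exact_iff_app.2 fun _ (v : W ⟶ _) hv =>
    hh.2 v ((comp_repMap_eq_zero_iff hp hα₀ v).1 hv)

end Duality

section TorsionFree

variable {C : Type u} [Category.{u} C] [Preadditive C] {F : AmbC C} {X Y W : C} {f : X ⟶ Y}
  {p : rep Y ⟶ F} {g : Y ⟶ W}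

lemma exists_comp_eq_repMap (hp : IsCokernelπ (repMap f) p) (hfg : f ≫ g = 0) :
    ∃ α₀ : F ⟶ rep W, p ≫ α₀ = repMap g :=
  let ⟨α₀, hα₀, _⟩ := hp.2 (repMap g) (by rw [← repMap_comp, hfg, repMap_zero])
  ⟨α₀, hα₀⟩

lemma evalNat_eq_zero_iff (hp : IsCokernelπ (repMap f) p) (hg : IsWeakCokernel f g)
    {α₀ : F ⟶ rep W} (hα₀ : p ≫ α₀ = repMap g) {Z : Cᵒᵖ} (a : F.obj Z) :
    evalNat F Z a = 0 ↔ α₀.app Z a = 0 := by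
  refine ⟨fun h => congrArg (fun β : dualR F ⟶ _ => β.app W α₀) h, fun h => ?_⟩
  have := epi_dualCover hp hg hα₀
  rw [← cancel_epi (dualCover α₀), comp_zero]
  exact (dualCover_comp_evalNat α₀ a).trans ((corepMap_eq_zero_iff _).2 h)

lemma mono_ddualUnit_iff_mono (hp : IsCokernelπ (repMap f) p) (hg : IsWeakCokernel f g)
    {α₀ : F ⟶ rep W} (hα₀ : p ≫ α₀ = repMap g) : Mono (ddualUnit F) ↔ Mono α₀ := by
  simp only [mono_iff_injective_app, injective_iff_map_eq_zero]
  exact forall_congr' fun Z => forall_congr' fun a =>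
    imp_congr_left (evalNat_eq_zero_iff hp hg hα₀ a)

lemma mono_iff_isWeakKernel (hp : IsCokernelπ (repMap f) p) {α₀ : F ⟶ rep W}
    (hα₀ : p ≫ α₀ = repMap g) (hfg : f ≫ g = 0) : Mono α₀ ↔ IsWeakKernel f g := by
  have hsurj := (epi_iff_surjective_app p).1 hp.epi
  rw [mono_iff_injective_app]
  refine ⟨fun h => ⟨hfg, fun Z t ht => ?_⟩, fun h Z => ?_⟩
  · rw [← hp.app_eq_zero_iff]
    apply (injective_iff_map_eq_zero _).1 (h (op Z))
    rw [app_app_eq_of_comp_eq hα₀, ht]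
    rfl
  · rw [injective_iff_map_eq_zero]
    intro a ha
    obtain ⟨s, rfl⟩ := hsurj Z a
    exact (hp.app_eq_zero_iff s).2 (h.2 s ((app_app_eq_of_comp_eq hα₀ s).symm.trans ha))

lemma mono_ddualUnit_iff (hp : IsCokernelπ (repMap f) p) (hg : IsWeakCokernel f g) :
    Mono (ddualUnit F) ↔ IsWeakKernel f g := by
  obtain ⟨α₀, hα₀⟩ := exists_comp_eq_repMap hp hg.1
  rw [mono_ddualUnit_iff_mono hp hg hα₀, mono_iff_isWeakKernel hp hα₀ hg.1]

lemma epi_ddualUnit_iff (hp : IsCokernelπ (repMap f) p) (hg : IsWeakCokernel f g) {V : C}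
    {h : W ⟶ V} (hh : IsWeakCokernel g h) : Epi (ddualUnit F) ↔ IsWeakKernel g h := by
  obtain ⟨α₀, hα₀⟩ := exists_comp_eq_repMap hp hg.1
  have := epi_dualCover hp hg hα₀
  have hex := exact_dualCover hp hα₀ hh
  have hsurj := (epi_iff_surjective_app p).1 hp.epi
  rw [epi_iff_surjective_app]
  refine ⟨fun hunit => ⟨hh.1, fun Z t ht => ?_⟩, fun hk Z (β : dualR F ⟶ corep Z.unop) => ?_⟩
  · obtain ⟨β, hβ⟩ := hex.desc' (corepMap t) (by rw [← corepMap_comp, ht, corepMap_zero])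
    obtain ⟨a, ha⟩ := hunit (op Z) β
    obtain ⟨(s : Z ⟶ Y), rfl⟩ := hsurj (op Z) a
    refine ⟨s, corepMap_injective ?_⟩
    calc corepMap (s ≫ g) = dualCover α₀ ≫ evalNat F (op Z) (p.app (op Z) s) := by
          rw [dualCover_comp_evalNat, app_app_eq_of_comp_eq hα₀]
      _ = dualCover α₀ ≫ β := congrArg _ ha
      _ = corepMap t := hβ
  · obtain ⟨t, ht⟩ := exists_corepMap_eq (dualCover α₀ ≫ β)
    obtain ⟨s, hs⟩ := hk.2 t <| (corepMap_eq_zero_iff _).1 <| by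
      rw [corepMap_comp, ht, ← Category.assoc, corepMap_comp_dualCover hp hα₀ hh.1, zero_comp]
    refine ⟨p.app Z s, (cancel_epi (dualCover α₀)).1 ?_⟩
    exact (dualCover_comp_evalNat α₀ _).trans (by rw [app_app_eq_of_comp_eq hα₀, hs, ht])

lemma mono_ddualUnit_of_mono {V : C} (α : F ⟶ rep V) [Mono α] : Mono (ddualUnit F) := by
  simp only [mono_iff_injective_app, injective_iff_map_eq_zero]
  intro Z a ha
  exact (injective_iff_map_eq_zero _).1 ((mono_iff_injective_app α).1 ‹_› Z) a
    (congrArg (fun β : dualR F ⟶ _ => β.app V α) ha)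

lemma exists_mono_isFGProj_iff [Abelian (ModOp C)] (hF : IsFinitelyPresented F) :
    (∃ (P : AmbC C) (ι : F ⟶ P), IsFGProj P ∧ Mono ι) ↔ Mono (ddualUnit F) := by
  refine ⟨fun ⟨P, ι, ⟨V, s, r, hsr⟩, hι⟩ => ?_, fun hunit => ?_⟩
  · have : Mono s := mono_of_mono_fac hsr
    exact mono_ddualUnit_of_mono (ι ≫ s)
  · obtain ⟨X, Y, f, p, hp⟩ := hF
    obtain ⟨W, g, hg⟩ := exists_isWeakCokernel f
    obtain ⟨α₀, hα₀⟩ := exists_comp_eq_repMap hp hg.1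
    exact ⟨rep W, α₀, ⟨W, 𝟙 _, 𝟙 _, Category.id_comp _⟩,
      (mono_ddualUnit_iff_mono hp hg hα₀).1 hunit⟩

lemma isTransposeOf_cokernel (hp : IsCokernelπ (repMap f) p) :
    IsTransposeOf (cokernel (corepMap f)) F :=
  ⟨X, Y, f, p, _, hp, isCokernelπ_cokernelπ _⟩

lemma isTorsionFree_one_iff [Abelian (ModOp C)] (hF : IsFinitelyPresented F) :
    IsTorsionFree F 1 ↔ Mono (ddualUnit F) := by
  constructor
  · rintro ⟨G, ⟨X, Y, f, p, q, hp, hq⟩, hres⟩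
    obtain ⟨W, g, hg⟩ := exists_isWeakCokernel f
    obtain ⟨R, hR, hvan⟩ := hres 1 le_rfl le_rfl
    exact (mono_ddualUnit_iff hp hg).2 <| (extVanishesAt_corepMap_iff hg.1).1 fun Z =>
      hR.extVanishesAt_one (isPartialProjResolutionOp_mk₃ hg hq) (hvan Z)
  · intro hunit
    obtain ⟨X, Y, f, p, hp⟩ := hF
    obtain ⟨W, g, hg⟩ := exists_isWeakCokernel f
    refine ⟨_, isTransposeOf_cokernel hp, fun i hi₁ hi₂ => ?_⟩
    obtain rfl : i = 1 := by omega
    exact ⟨_, isPartialProjResolutionOp_mk₃ hg (isCokernelπ_cokernelπ _),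
      (extVanishesAt_corepMap_iff hg.1).2 ((mono_ddualUnit_iff hp hg).1 hunit)⟩

lemma isTorsionFree_two_iff [Abelian (ModOp C)] (hF : IsFinitelyPresented F) :
    IsTorsionFree F 2 ↔ IsIso (ddualUnit F) := by
  rw [isIso_iff_mono_and_epi]
  constructor
  · rintro ⟨G, ⟨X, Y, f, p, q, hp, hq⟩, hres⟩
    obtain ⟨W, g, hg⟩ := exists_isWeakCokernel f
    obtain ⟨V, h, hh⟩ := exists_isWeakCokernel g
    obtain ⟨R₁, hR₁, hvan₁⟩ := hres 1 le_rfl (by omega)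
    obtain ⟨R₂, hR₂, hvan₂⟩ := hres 2 (by omega) le_rfl
    exact ⟨(mono_ddualUnit_iff hp hg).2 <| (extVanishesAt_corepMap_iff hg.1).1 fun Z =>
        hR₁.extVanishesAt_one (isPartialProjResolutionOp_mk₃ hg hq) (hvan₁ Z),
      (epi_ddualUnit_iff hp hg hh).2 <| (extVanishesAt_corepMap_iff hh.1).1 fun Z =>
        hR₂.extVanishesAt_two (isPartialProjResolutionOp_mk₄ hg hh hq) (hvan₂ Z)⟩
  · rintro ⟨hmono, hepi⟩
    obtain ⟨X, Y, f, p, hp⟩ := hF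
    obtain ⟨W, g, hg⟩ := exists_isWeakCokernel f
    obtain ⟨V, h, hh⟩ := exists_isWeakCokernel g
    refine ⟨_, isTransposeOf_cokernel hp, fun i hi₁ hi₂ => ?_⟩
    interval_cases i
    · exact ⟨_, isPartialProjResolutionOp_mk₃ hg (isCokernelπ_cokernelπ _),
        (extVanishesAt_corepMap_iff hg.1).2 ((mono_ddualUnit_iff hp hg).1 hmono)⟩
    · exact ⟨_, isPartialProjResolutionOp_mk₄ hg hh (isCokernelπ_cokernelπ _),
        (extVanishesAt_corepMap_iff hh.1).2 ((epi_ddualUnit_iff hp hg hh).1 hepi)⟩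

end TorsionFree

end Paper

theorem stmt_13_general {C : Type u} [Category.{u} C] [Preadditive C]
    (hlc : Nonempty (Abelian (ModOp C)))
    (F : AmbC C) (hF : IsFinitelyPresented F) :
    (IsTorsionFree F 1 ↔ ∃ (P : AmbC C) (ι : F ⟶ P), IsFGProj P ∧ Mono ι) ∧
    (IsTorsionFree F 2 ↔ IsIso (ddualUnit F)) := by
  let := hlc.some
  rw [isTorsionFree_one_iff hF, exists_mono_isFGProj_iff hF]
  exact ⟨Iff.rfl, isTorsionFree_two_iff hF⟩

/-- For a coherent category `C` and a finitely presented contravariant functor `F`: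
`F` is `1`-torsion free iff it embeds into a projective object of `mod C`, and `F` is
`2`-torsion free iff the canonical map `F ⟶ F**` is an isomorphism. -/
theorem stmt_13 {C : Type u} [Category.{u} C] [Preadditive C] [HasZeroObject C]
    [HasFiniteBiproducts C] [IsIdempotentComplete C]
    (hrc : Nonempty (Abelian (ModC C))) (hlc : Nonempty (Abelian (ModOp C)))
    (F : AmbC C) (hF : IsFinitelyPresented F) :
    (IsTorsionFree F 1 ↔ ∃ (P : AmbC C) (ι : F ⟶ P), IsFGProj P ∧ Mono ι) ∧
    (IsTorsionFree F 2 ↔ IsIso (ddualUnit F)) :=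
  stmt_13_general hlc F hF
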